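/- For every positive integer n, the representation number r(n) equals 4 times the difference between the number of divisors of n congruent to 1 mod 4 and the number of divisors of n congruent to 3 mod 4; that is, r(n) = 4(∑_{d∣n, d≡1 (4)} 1 − ∑_{d∣n, d≡3 (4)} 1). -/

import Mathlib

open Zsqrtd

local notation "ℤ[i]" => GaussianInt

namespace Jacobi

def F (n : ℕ) : Type := {z : ℤ[i] // z.norm = (n : ℤ)}

lemma norm_eq_one_cases {u : ℤ[i]} (h : u.norm = 1) :
    u = ⟨1,0⟩ ∨ u = ⟨-1,0⟩ ∨ u = ⟨0,1⟩ ∨ u = ⟨0,-1⟩ := by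
  have hd : u.re * u.re + u.im * u.im = 1 := by
    rw [Zsqrtd.norm_def] at h; linarith
  have hre : -1 ≤ u.re ∧ u.re ≤ 1 := by constructor <;> nlinarith
  have him : -1 ≤ u.im ∧ u.im ≤ 1 := by constructor <;> nlinarith
  obtain ⟨a, b⟩ := hre; obtain ⟨c, d⟩ := him
  have : u = ⟨u.re, u.im⟩ := rfl
  rw [this]
  interval_cases hu : u.re <;> interval_cases hv : u.im <;> simp_all

lemma normOne (a b : ℤ) (h : a = 1 ∧ b = 0 ∨ a = -1 ∧ b = 0 ∨ a = 0 ∧ b = 1 ∨ a = 0 ∧ b = -1) :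
    (⟨a, b⟩ : ℤ[i]).norm = 1 := by
  rw [Zsqrtd.norm_def]; rcases h with ⟨h1,h2⟩|⟨h1,h2⟩|⟨h1,h2⟩|⟨h1,h2⟩ <;> subst h1 <;> subst h2 <;> norm_num

lemma i4pow : ((⟨0,1⟩:ℤ[i]) ^ (0:ℕ) = 1) ∧ ((⟨0,1⟩:ℤ[i]) ^ (1:ℕ) = ⟨0,1⟩)
    ∧ ((⟨0,1⟩:ℤ[i]) ^ (2:ℕ) = ⟨-1,0⟩) ∧ ((⟨0,1⟩:ℤ[i]) ^ (3:ℕ) = ⟨0,-1⟩) := by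
  refine ⟨rfl, rfl, ?_, ?_⟩ <;>
    · apply Zsqrtd.ext <;> simp [pow_succ, Zsqrtd.re_mul, Zsqrtd.im_mul]

noncomputable def equivF1 : Fin 4 ≃ F 1 := by
  refine Equiv.ofBijective (fun j => ⟨(⟨0,1⟩ : ℤ[i]) ^ (j : ℕ), ?_⟩) ⟨?_, ?_⟩
  · have : ((⟨0,1⟩ : ℤ[i])).norm = 1 := normOne _ _ (by tauto)
    rw [show ((⟨0,1⟩:ℤ[i]) ^ (j:ℕ)).norm = (⟨0,1⟩:ℤ[i]).norm ^ (j:ℕ) from map_pow Zsqrtd.normMonoidHom _ _, this, one_pow]; norm_num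
  · intro a b hab
    obtain ⟨p0, p1, p2, p3⟩ := i4pow
    have hab' := congrArg Subtype.val hab
    fin_cases a <;> fin_cases b <;>
      first
        | rfl
        | (exfalso; simp only [] at hab'; simp [p0,p1,p2,p3, Zsqrtd.ext_iff] at hab')
  · rintro ⟨z, hz⟩
    norm_num at hz
    obtain ⟨p0, p1, p2, p3⟩ := i4pow
    rcases norm_eq_one_cases hz with h|h|h|h
    · exact ⟨0, Subtype.ext (by simp [h, p0]; rfl)⟩
    · exact ⟨2, Subtype.ext (by show (⟨0,1⟩:ℤ[i]) ^ ((2:Fin 4):ℕ) = z; rw [show ((2:Fin 4):ℕ) = 2 from rfl, p2, h])⟩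
    · exact ⟨1, Subtype.ext (by simp [p1, h])⟩
    · exact ⟨3, Subtype.ext (by show (⟨0,1⟩:ℤ[i]) ^ ((3:Fin 4):ℕ) = z; rw [show ((3:Fin 4):ℕ) = 3 from rfl, p3, h])⟩
lemma card_F1 : Nat.card (F 1) = 4 := by
  rw [← Nat.card_congr equivF1]; simp

/-! ### Basic norm helpers -/

lemma norm_mul_conj' (z : ℤ[i]) : z * star z = (z.norm : ℤ[i]) :=
  (Zsqrtd.norm_eq_mul_conj z).symm

lemma norm_dvd_of_dvd {a z : ℤ[i]} (h : a ∣ z) : a.norm ∣ z.norm := by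
  obtain ⟨c, rfl⟩ := h; exact ⟨c.norm, Zsqrtd.norm_mul a c⟩

lemma natCast_eq_mul_conj {p : ℕ} {w : ℤ[i]} (hw : w.norm = (p : ℤ)) :
    (p : ℤ[i]) = w * star w := by
  rw [norm_mul_conj', hw]; push_cast; ring

set_option synthInstance.maxHeartbeats 1000000 in
lemma prime_of_norm_prime {z : ℤ[i]} {p : ℕ} (hp : p.Prime) (h : z.norm = (p : ℤ)) :
    Prime z := by
  rw [← irreducible_iff_prime]
  constructor
  · intro hu
    rw [Zsqrtd.isUnit_iff_norm_isUnit, h, Int.isUnit_iff] at hu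
    rcases hu with hu | hu
    · exact absurd (by exact_mod_cast hu : p = 1) hp.ne_one
    · have h0 : (0:ℤ) ≤ (p:ℤ) := Int.natCast_nonneg p
      omega
  · intro x y hxy
    have hn : x.norm.natAbs * y.norm.natAbs = p := by
      have h2 : x.norm * y.norm = (p : ℤ) := by rw [← Zsqrtd.norm_mul, ← hxy, h]
      have h3 := congrArg Int.natAbs h2
      simpa [Int.natAbs_mul] using h3
    rcases hp.eq_one_or_self_of_dvd x.norm.natAbs ⟨_, hn.symm⟩ with h1 | h1
    · exact Or.inl (Zsqrtd.norm_eq_one_iff.mp h1)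
    · right
      apply Zsqrtd.norm_eq_one_iff.mp
      have hy := hn
      rw [h1] at hy
      exact Nat.eq_of_mul_eq_mul_left hp.pos (by rw [mul_one]; exact hy)

lemma int_dvd_norm_cast {p : ℕ} {z : ℤ[i]} (h : (p : ℤ) ∣ z.norm) :
    (p : ℤ[i]) ∣ z * star z := by
  rw [norm_mul_conj']
  obtain ⟨c, hc⟩ := h
  exact ⟨(c : ℤ[i]), by rw [hc]; push_cast; ring⟩

lemma step {p : ℕ} {w : ℤ[i]} (hp : p.Prime) (hw : w.norm = (p : ℤ)) {z : ℤ[i]}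
    (h : (p : ℤ) ∣ z.norm) : ∃ ρ : ℤ[i], ρ.norm = (p : ℤ) ∧ ρ ∣ z := by
  have hprime : Prime w := prime_of_norm_prime hp hw
  have hwdvd : w ∣ z * star z :=
    dvd_trans ⟨star w, natCast_eq_mul_conj hw⟩ (int_dvd_norm_cast h)
  rcases hprime.2.2 _ _ hwdvd with hz | hz
  · exact ⟨w, hw, hz⟩
  · obtain ⟨c, hc⟩ := hz
    exact ⟨star w, by rw [Zsqrtd.norm_conj, hw], ⟨star c, by
      have := congrArg star hc; simpa [mul_comm] using this⟩⟩

lemma inert_dvd {p : ℕ} [Fact p.Prime] (h3 : p % 4 = 3) {z : ℤ[i]}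
    (h : (p : ℤ) ∣ z.norm) : (p : ℤ[i]) ∣ z := by
  have hprime : Prime (p : ℤ[i]) :=
    GaussianInt.prime_of_nat_prime_of_mod_four_eq_three p h3
  rcases hprime.2.2 _ _ (int_dvd_norm_cast h) with hz | hz
  · exact hz
  · obtain ⟨c, hc⟩ := hz
    exact ⟨star c, by have := congrArg star hc; simpa [mul_comm] using this⟩

/-! ### Elements of norm p for p = 2 or p ≡ 1 mod 4 -/

lemma exists_norm_eq {p : ℕ} (hp : p.Prime) (h : p % 4 ≠ 3) :
    ∃ w : ℤ[i], w.norm = (p : ℤ) := by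
  haveI : Fact p.Prime := ⟨hp⟩
  obtain ⟨a, b, hab⟩ := Nat.Prime.sq_add_sq h
  exact ⟨⟨(a : ℤ), (b : ℤ)⟩, by
    rw [Zsqrtd.norm_def]
    push_cast [← hab]
    ring⟩

/-! ### Existence of coprime factorizations -/

lemma norm_natCast (p : ℕ) : ((p : ℤ[i])).norm = (p : ℤ) * (p : ℤ) := by
  rw [Zsqrtd.norm_def]; simp

lemma exists_factor :
    ∀ m : ℕ, ∀ n : ℕ, Nat.Coprime m n → ∀ z : ℤ[i], z.norm = ((m : ℤ) * n) →
      ∃ a b : ℤ[i], z = a * b ∧ a.norm = (m : ℤ) ∧ b.norm = (n : ℤ) := by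
  intro m
  induction m using Nat.strong_induction_on with
  | _ m ih =>
    intro n hmn z hz
    rcases Nat.eq_zero_or_pos m with rfl | hm0
    · have hn1 : n = 1 := by simpa [Nat.Coprime] using hmn
      subst hn1
      have hz0 : z = 0 := by
        rw [← GaussianInt.norm_eq_zero]
        simpa using hz
      exact ⟨0, 1, by simp [hz0], by simp [Zsqrtd.norm_def], by simp [Zsqrtd.norm_def]⟩
    rcases Nat.lt_or_ge m 2 with hm1 | hm2
    · have : m = 1 := by omega
      subst this
      exact ⟨1, z, by simp, by simp [Zsqrtd.norm_def], by simpa using hz⟩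
    · set p := m.minFac with hp_def
      have hp : p.Prime := Nat.minFac_prime (by omega)
      have hpm : p ∣ m := Nat.minFac_dvd m
      have hpn : ¬ p ∣ n := fun hd =>
        hp.ne_one (Nat.eq_one_of_dvd_one (hmn ▸ Nat.dvd_gcd hpm hd))
      have hpcop : Nat.Coprime p n := (Nat.Prime.coprime_iff_not_dvd hp).mpr hpn
      haveI : Fact p.Prime := ⟨hp⟩
      by_cases h3 : p % 4 = 3
      · -- inert case
        have hpz : (p : ℤ[i]) ∣ z := by
          apply inert_dvd h3
          rw [hz]
          exact Dvd.dvd.mul_right (Int.natCast_dvd_natCast.mpr hpm) _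
        obtain ⟨z', hz'⟩ := hpz
        have hnormz' : (p:ℤ) * (p:ℤ) * z'.norm = (m : ℤ) * n := by
          rw [← hz, hz', Zsqrtd.norm_mul, norm_natCast]
        have hp2m : p * p ∣ m := by
          have h1 : p * p ∣ m * n := by
            have h2 : ((p*p : ℕ) : ℤ) ∣ ((m*n : ℕ) : ℤ) :=
              ⟨z'.norm, by push_cast; linarith⟩
            exact_mod_cast h2
          exact (Nat.Coprime.mul hpcop hpcop).dvd_of_dvd_mul_right h1
        obtain ⟨m', hm'⟩ := hp2m
        have hm'lt : m' < m := by
          have h2 := hp.two_le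
          have h0 : 0 < m' := by
            rcases Nat.eq_zero_or_pos m' with rfl | h
            · omega
            · exact h
          calc m' < 4 * m' := by omega
          _ ≤ p * p * m' := Nat.mul_le_mul_right m' (by nlinarith)
          _ = m := hm'.symm
        have hm'cop : Nat.Coprime m' n := Nat.Coprime.coprime_dvd_left ⟨p*p, by rw [hm']; ring⟩ hmn
        have hz'norm : z'.norm = (m' : ℤ) * n := by
          have hppos : (0:ℤ) < (p:ℤ) * p := by
            have := hp.pos
            positivity
          apply mul_left_cancel₀ (ne_of_gt hppos)
          rw [hnormz', hm']
          push_cast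
          ring
        obtain ⟨a', b', hab', ha', hb'⟩ := ih m' hm'lt n hm'cop z' hz'norm
        refine ⟨(p : ℤ[i]) * a', b', by rw [hz', hab']; ring, ?_, hb'⟩
        rw [Zsqrtd.norm_mul, norm_natCast, ha', hm']
        push_cast
        ring
      · -- split/ramified case
        obtain ⟨w, hw⟩ := exists_norm_eq hp h3
        obtain ⟨ρ, hρnorm, z', hz'⟩ := step hp hw (by
          rw [hz]
          exact Dvd.dvd.mul_right (Int.natCast_dvd_natCast.mpr hpm) _)
        obtain ⟨m', hm'⟩ := hpm
        have hm'lt : m' < m := by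
          have h2 := hp.two_le
          have h0 : 0 < m' := by
            rcases Nat.eq_zero_or_pos m' with rfl | h; · omega
            · exact h
          calc m' < 2 * m' := by omega
          _ ≤ p * m' := Nat.mul_le_mul_right m' (by omega)
          _ = m := hm'.symm
        have hm'cop : Nat.Coprime m' n := Nat.Coprime.coprime_dvd_left ⟨p, by rw [hm']; ring⟩ hmn
        have hz'norm : z'.norm = (m' : ℤ) * n := by
          have hppos : (0:ℤ) < (p:ℤ) := by exact_mod_cast hp.pos
          apply mul_left_cancel₀ (ne_of_gt hppos)
          have : ρ.norm * z'.norm = z.norm := by rw [hz', Zsqrtd.norm_mul]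
          rw [hρnorm] at this
          rw [this, hz, hm']
          push_cast
          ring
        obtain ⟨a', b', hab', ha', hb'⟩ := ih m' hm'lt n hm'cop z' hz'norm
        refine ⟨ρ * a', b', by rw [hz', hab']; ring, ?_, hb'⟩
        rw [Zsqrtd.norm_mul, hρnorm, ha', hm']
        push_cast
        ring

/-! ### Coprimality and uniqueness of factorizations -/

lemma isCoprime_of_norm_coprime {a b : ℤ[i]} (h : IsCoprime a.norm b.norm) :
    IsCoprime a b := by
  rw [← EuclideanDomain.gcd_isUnit_iff]
  set d := EuclideanDomain.gcd a b with hd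
  have hda : d ∣ a := EuclideanDomain.gcd_dvd_left a b
  have hdb : d ∣ b := EuclideanDomain.gcd_dvd_right a b
  have : IsUnit d.norm := h.isUnit_of_dvd' (norm_dvd_of_dvd hda) (norm_dvd_of_dvd hdb)
  exact (Zsqrtd.isUnit_iff_norm_isUnit d).mpr this

lemma factor_unique {m n : ℕ} (hmn : Nat.Coprime m n) (hm : 0 < m) {a b a' b' : ℤ[i]}
    (ha : a.norm = (m : ℤ)) (hb' : b'.norm = (n : ℤ)) (ha' : a'.norm = (m : ℤ))
    (h : a * b = a' * b') :
    ∃ u : ℤ[i], u.norm = 1 ∧ a' = a * u ∧ b = u * b' := by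
  have hcop : IsCoprime a b' := by
    apply isCoprime_of_norm_coprime
    rw [ha, hb']
    exact Int.isCoprime_iff_gcd_eq_one.mpr (by
      rwa [Int.gcd_natCast_natCast])
  have hdvd : a ∣ a' := by
    have : a ∣ a' * b' := ⟨b, h.symm⟩
    exact hcop.dvd_of_dvd_mul_right this
  obtain ⟨u, hu⟩ := hdvd
  have ha0 : a ≠ 0 := by
    intro h0
    rw [h0, Zsqrtd.norm_zero] at ha
    exact_mod_cast absurd ha.symm (by exact_mod_cast hm.ne')
  have hun : u.norm = 1 := by
    have : a.norm * u.norm = a.norm * 1 := by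
      rw [mul_one, ← Zsqrtd.norm_mul, ← hu, ha', ha]
    exact mul_left_cancel₀ (by rw [ha]; exact_mod_cast hm.ne') this
  refine ⟨u, hun, hu, ?_⟩
  have : a * b = a * (u * b') := by rw [h, hu]; ring
  exact mul_left_cancel₀ ha0 this

/-! ### The multiplicativity equivalence -/

lemma card_F_mul {m n : ℕ} (hmn : Nat.Coprime m n) (hm : 0 < m) (hn : 0 < n) :
    4 * Nat.card (F (m * n)) = Nat.card (F m) * Nat.card (F n) := by
  classical
  have hfac : ∀ z : F (m * n), ∃ ab : ℤ[i] × ℤ[i],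
      z.1 = ab.1 * ab.2 ∧ ab.1.norm = (m : ℤ) ∧ ab.2.norm = (n : ℤ) := by
    rintro ⟨z, hz⟩
    obtain ⟨a, b, h1, h2, h3⟩ := exists_factor m n hmn z (by rw [hz]; push_cast; ring)
    exact ⟨(a, b), h1, h2, h3⟩
  choose fac hfac1 hfac2 hfac3 using hfac
  have key : Function.Bijective (fun uz : F 1 × F (m * n) =>
      ((⟨uz.1.1 * (fac uz.2).1, by
          rw [Zsqrtd.norm_mul, uz.1.2, hfac2 uz.2]; simp⟩ : F m),
       (⟨star uz.1.1 * (fac uz.2).2, by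
          rw [Zsqrtd.norm_mul, Zsqrtd.norm_conj, uz.1.2, hfac3 uz.2]; simp⟩ : F n))) := by
    constructor
    · rintro ⟨u, z⟩ ⟨v, w⟩ hvw
      simp only [Prod.mk.injEq, Subtype.mk.injEq] at hvw
      obtain ⟨h1, h2⟩ := hvw
      have husu : u.1 * star u.1 = 1 := by
        rw [norm_mul_conj', u.2]; simp
      have hvsv : v.1 * star v.1 = 1 := by
        rw [norm_mul_conj', v.2]; simp
      have hzw : z = w := by
        apply Subtype.ext
        have := congrArg₂ (· * ·) h1 h2
        clear this
        calc z.1 = (u.1 * star u.1) * ((fac z).1 * (fac z).2) := by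
              rw [husu, one_mul, ← hfac1 z]
        _ = (v.1 * star v.1) * ((fac w).1 * (fac w).2) := by
              rw [show u.1 * star u.1 * ((fac z).1 * (fac z).2)
                  = (u.1 * (fac z).1) * (star u.1 * (fac z).2) by ring, h1, h2]
              ring
        _ = w.1 := by rw [hvsv, one_mul, ← hfac1 w]
      subst hzw
      have hfz0 : (fac z).1 ≠ 0 := by
        intro h0
        have := hfac2 z
        rw [h0, Zsqrtd.norm_zero] at this
        exact hm.ne' (by exact_mod_cast this.symm)
      have huv : u.1 = v.1 := by
        have := h1
        rw [mul_comm u.1, mul_comm v.1] at this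
        exact mul_left_cancel₀ hfz0 this
      rw [Prod.mk.injEq]
      exact ⟨Subtype.ext huv, rfl⟩
    · rintro ⟨a, b⟩
      set z : F (m * n) := ⟨a.1 * b.1, by
        rw [Zsqrtd.norm_mul, a.2, b.2]; push_cast; ring⟩ with hzdef
      obtain ⟨u, hu1, hu2, hu3⟩ := factor_unique hmn hm (hfac2 z) b.2 a.2
        (by rw [← hfac1 z])
      refine ⟨(⟨u, hu1⟩, z), ?_⟩
      simp only [Prod.mk.injEq]
      constructor
      · apply Subtype.ext
        simp only
        rw [mul_comm, ← hu2]
      · apply Subtype.ext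
        simp only
        have husu : star u * u = 1 := by
          rw [mul_comm, norm_mul_conj', hu1]; simp
        calc star u * (fac z).2 = star u * (u * b.1) := by rw [← hu3]
        _ = (star u * u) * b.1 := by ring
        _ = b.1 := by rw [husu, one_mul]
  have := Nat.card_congr (Equiv.ofBijective _ key)
  rw [Nat.card_prod, Nat.card_prod, card_F1] at this
  exact this

/-! ### Prime power counts: p = 2 -/

lemma norm_eq_two_cases {u : ℤ[i]} (h : u.norm = 2) :
    u = ⟨1,1⟩ ∨ u = ⟨1,-1⟩ ∨ u = ⟨-1,1⟩ ∨ u = ⟨-1,-1⟩ := by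
  have hd : u.re * u.re + u.im * u.im = 2 := by
    rw [Zsqrtd.norm_def] at h; linarith
  have hre : -1 ≤ u.re ∧ u.re ≤ 1 := by constructor <;> nlinarith
  have him : -1 ≤ u.im ∧ u.im ≤ 1 := by constructor <;> nlinarith
  obtain ⟨a, b⟩ := hre; obtain ⟨c, d⟩ := him
  have hu : u = ⟨u.re, u.im⟩ := rfl
  rw [hu]
  interval_cases h1 : u.re <;> interval_cases h2 : u.im <;> simp_all

lemma pi2_dvd_of_norm_two {ρ : ℤ[i]} (h : ρ.norm = 2) : (⟨1,1⟩ : ℤ[i]) ∣ ρ := by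
  rcases norm_eq_two_cases h with rfl | rfl | rfl | rfl
  · exact ⟨⟨1,0⟩, by apply Zsqrtd.ext <;> simp [Zsqrtd.re_mul, Zsqrtd.im_mul]⟩
  · exact ⟨⟨0,-1⟩, by apply Zsqrtd.ext <;> simp [Zsqrtd.re_mul, Zsqrtd.im_mul]⟩
  · exact ⟨⟨0,1⟩, by apply Zsqrtd.ext <;> simp [Zsqrtd.re_mul, Zsqrtd.im_mul]⟩
  · exact ⟨⟨-1,0⟩, by apply Zsqrtd.ext <;> simp [Zsqrtd.re_mul, Zsqrtd.im_mul]⟩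

lemma norm_pi2 : ((⟨1,1⟩ : ℤ[i])).norm = 2 := by rw [Zsqrtd.norm_def]; norm_num

lemma two_pow_descent : ∀ k : ℕ, ∀ z : ℤ[i], z.norm = (2 ^ k : ℕ) →
    ∃ u : ℤ[i], u.norm = 1 ∧ z = u * (⟨1,1⟩ : ℤ[i]) ^ k := by
  intro k
  induction k with
  | zero => intro z hz; exact ⟨z, by simpa using hz, by simp⟩
  | succ k ih =>
    intro z hz
    have h2 : (2:ℤ) ∣ z.norm := by
      rw [hz]
      have : ((2:ℕ):ℤ) ∣ ((2^(k+1):ℕ):ℤ) := Int.natCast_dvd_natCast.mpr ⟨2^k, by ring⟩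
      exact_mod_cast this
    obtain ⟨ρ, hρ, hρz⟩ := step Nat.prime_two norm_pi2 (by exact_mod_cast h2)
    have hπρ : (⟨1,1⟩ : ℤ[i]) ∣ ρ := pi2_dvd_of_norm_two (by exact_mod_cast hρ)
    obtain ⟨z', hz'⟩ := dvd_trans hπρ hρz
    have hz'norm : z'.norm = ((2 ^ k : ℕ) : ℤ) := by
      have h4 : (⟨1,1⟩ : ℤ[i]).norm * z'.norm = z.norm := by rw [hz', Zsqrtd.norm_mul]
      rw [norm_pi2] at h4
      have : (2:ℤ) * z'.norm = 2 * (2^k : ℕ) := by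
        rw [h4, hz]; push_cast; ring
      exact mul_left_cancel₀ two_ne_zero this
    obtain ⟨u, hu1, hu2⟩ := ih z' hz'norm
    exact ⟨u, hu1, by rw [hz', hu2, pow_succ]; ring⟩

lemma card_F_two_pow (k : ℕ) : Nat.card (F (2 ^ k)) = 4 := by
  have hπk : ((⟨1,1⟩ : ℤ[i]) ^ k).norm = ((2 ^ k : ℕ) : ℤ) := by
    rw [show ((⟨1,1⟩ : ℤ[i]) ^ k).norm = (⟨1,1⟩ : ℤ[i]).norm ^ k from
      map_pow Zsqrtd.normMonoidHom _ _, norm_pi2]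
    push_cast; ring
  have hπk0 : (⟨1,1⟩ : ℤ[i]) ^ k ≠ 0 := by
    intro h0
    rw [h0] at hπk
    simp only [Zsqrtd.norm_zero] at hπk
    have : (0:ℤ) < ((2:ℕ)^k : ℕ) := by positivity
    omega
  have key : Function.Bijective (fun u : F 1 => (⟨u.1 * (⟨1,1⟩ : ℤ[i]) ^ k, by
      rw [Zsqrtd.norm_mul, u.2, hπk]; simp⟩ : F (2 ^ k))) := by
    constructor
    · rintro u v huv
      simp only [Subtype.mk.injEq] at huv
      exact Subtype.ext (mul_right_cancel₀ hπk0 huv)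
    · rintro ⟨z, hz⟩
      obtain ⟨u, hu1, hu2⟩ := two_pow_descent k z hz
      exact ⟨⟨u, hu1⟩, Subtype.ext hu2.symm⟩
  have h : Nat.card (F 1) = Nat.card (F (2 ^ k)) :=
    Nat.card_congr (Equiv.ofBijective _ key)
  rw [card_F1] at h
  exact h.symm

/-! ### Prime power counts: inert p ≡ 3 mod 4 -/

lemma inert_descent {p : ℕ} (hp : p.Prime) (h3 : p % 4 = 3) :
    ∀ k : ℕ, ∀ z : ℤ[i], z.norm = ((p ^ k : ℕ) : ℤ) →
      k % 2 = 0 ∧ ∃ u : ℤ[i], u.norm = 1 ∧ z = u * ((p : ℤ[i])) ^ (k / 2) := by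
  haveI : Fact p.Prime := ⟨hp⟩
  intro k
  induction k using Nat.strong_induction_on with
  | _ k ih =>
    intro z hz
    match k with
    | 0 => exact ⟨rfl, z, by simpa using hz, by simp⟩
    | (k+1) =>
      have hdvd : (p : ℤ[i]) ∣ z := by
        apply inert_dvd h3
        rw [hz]
        exact Int.natCast_dvd_natCast.mpr ⟨p ^ k, by ring⟩
      obtain ⟨z', hz'⟩ := hdvd
      have hnorm' : ((p:ℤ)) * ((p:ℤ)) * z'.norm = ((p ^ (k+1) : ℕ) : ℤ) := by
        rw [← hz, hz', Zsqrtd.norm_mul, norm_natCast]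
      match k with
      | 0 =>
        exfalso
        have hz'pos : 0 < z'.norm ∨ z'.norm = 0 := by
          rcases lt_or_eq_of_le (GaussianInt.norm_nonneg z') with h | h
          · exact Or.inl h
          · exact Or.inr h.symm
        have hp1 : (1:ℤ) < p := by exact_mod_cast hp.one_lt
        rcases hz'pos with h | h
        · nlinarith [hnorm', (by push_cast; ring_nf : ((p ^ 1 : ℕ) : ℤ) = (p:ℤ))]
        · rw [h] at hnorm'; push_cast at hnorm'; nlinarith
      | (k+1) =>
        have hz'norm : z'.norm = ((p ^ k : ℕ) : ℤ) := by
          have hppos : (0:ℤ) < (p:ℤ)*(p:ℤ) := by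
            have := hp.pos; positivity
          apply mul_left_cancel₀ (ne_of_gt hppos)
          rw [hnorm']; push_cast; ring
        obtain ⟨hk2, u, hu1, hu2⟩ := ih k (by omega) z' hz'norm
        refine ⟨by omega, u, hu1, ?_⟩
        rw [hz', hu2, show (k + 1 + 1) / 2 = k / 2 + 1 by omega, pow_succ]
        ring

lemma card_F_inert_even {p : ℕ} (hp : p.Prime) (h3 : p % 4 = 3) {k : ℕ} (hk : k % 2 = 0) :
    Nat.card (F (p ^ k)) = 4 := by
  have hπk : (((p : ℤ[i])) ^ (k / 2)).norm = ((p ^ k : ℕ) : ℤ) := by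
    rw [show (((p : ℤ[i])) ^ (k/2)).norm = ((p : ℤ[i])).norm ^ (k/2) from
      map_pow Zsqrtd.normMonoidHom _ _, norm_natCast]
    push_cast
    rw [← sq, ← pow_mul]
    congr 1
    omega
  have hπk0 : ((p : ℤ[i])) ^ (k / 2) ≠ 0 := by
    intro h0
    rw [h0] at hπk
    simp only [Zsqrtd.norm_zero] at hπk
    have : (0:ℤ) < ((p^k : ℕ) : ℤ) := by exact_mod_cast Nat.pow_pos hp.pos
    omega
  have key : Function.Bijective (fun u : F 1 => (⟨u.1 * ((p : ℤ[i])) ^ (k/2), by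
      rw [Zsqrtd.norm_mul, u.2, hπk]; simp⟩ : F (p ^ k))) := by
    constructor
    · rintro u v huv
      simp only [Subtype.mk.injEq] at huv
      exact Subtype.ext (mul_right_cancel₀ hπk0 huv)
    · rintro ⟨z, hz⟩
      obtain ⟨-, u, hu1, hu2⟩ := inert_descent hp h3 k z hz
      exact ⟨⟨u, hu1⟩, Subtype.ext hu2.symm⟩
  have h : Nat.card (F 1) = Nat.card (F (p ^ k)) :=
    Nat.card_congr (Equiv.ofBijective _ key)
  rw [card_F1] at h
  exact h.symm

lemma card_F_inert_odd {p : ℕ} (hp : p.Prime) (h3 : p % 4 = 3) {k : ℕ} (hk : k % 2 = 1) :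
    Nat.card (F (p ^ k)) = 0 := by
  rw [Nat.card_eq_zero]
  left
  constructor
  rintro ⟨z, hz⟩
  obtain ⟨h0, -⟩ := inert_descent hp h3 k z hz
  omega

/-! ### Prime power counts: split p ≡ 1 mod 4 -/

lemma split_pi {p : ℕ} (hp : p.Prime) (h1 : p % 4 = 1) :
    ∃ π : ℤ[i], π.norm = (p : ℤ) ∧ Prime π ∧ ¬ π ∣ star π := by
  haveI : Fact p.Prime := ⟨hp⟩
  obtain ⟨a, b, hab⟩ := Nat.Prime.sq_add_sq (p := p) (by omega)
  have ha0 : a ≠ 0 := by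
    rintro rfl
    have hbb : b * b = p := by nlinarith [hab]
    rcases hp.eq_one_or_self_of_dvd b ⟨b, hbb.symm⟩ with h | h
    · subst h; have := hp.one_lt; omega
    · subst h; have := hp.one_lt; nlinarith
  have hb0 : b ≠ 0 := by
    rintro rfl
    have haa : a * a = p := by nlinarith [hab]
    rcases hp.eq_one_or_self_of_dvd a ⟨a, haa.symm⟩ with h | h
    · subst h; have := hp.one_lt; omega
    · subst h; have := hp.one_lt; nlinarith
  set π : ℤ[i] := ⟨(a:ℤ), (b:ℤ)⟩ with hπ_def
  have hπ : π.norm = (p : ℤ) := by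
    rw [Zsqrtd.norm_def]; push_cast [← hab]; ring
  refine ⟨π, hπ, prime_of_norm_prime hp hπ, ?_⟩
  rintro ⟨c, hc⟩
  have hcnorm : c.norm = 1 := by
    have h2 : π.norm * c.norm = π.norm * 1 := by
      rw [mul_one, ← Zsqrtd.norm_mul, ← hc, Zsqrtd.norm_conj]
    exact mul_left_cancel₀ (by rw [hπ]; exact_mod_cast hp.ne_zero) h2
  have hstar : (star π).re = (a:ℤ) ∧ (star π).im = -(b:ℤ) := ⟨rfl, rfl⟩
  rcases norm_eq_one_cases hcnorm with rfl | rfl | rfl | rfl <;>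
    rw [Zsqrtd.ext_iff] at hc <;>
    simp [Zsqrtd.re_mul, Zsqrtd.im_mul, hπ_def] at hc
  · omega
  · omega
  · -- c = i : a = -b
    have : (a:ℤ) = -(b:ℤ) := by
      have := hc.1
      simpa using this
    omega
  · -- c = -i : a = b, so p = 2a²
    have hab' : (a:ℤ) = (b:ℤ) := by
      have := hc.1
      simpa using this
    have : a = b := by exact_mod_cast hab'
    subst this
    have : p = 2 * a^2 := by omega
    omega

lemma split_descent {p : ℕ} {π : ℤ[i]} (hp : p.Prime) (hπ : π.norm = (p : ℤ))
    (hπp : Prime π) :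
    ∀ k : ℕ, ∀ z : ℤ[i], z.norm = ((p ^ k : ℕ) : ℤ) →
      ∃ u : ℤ[i], ∃ j : ℕ, j ≤ k ∧ u.norm = 1 ∧ z = u * π ^ j * (star π) ^ (k - j) := by
  intro k
  induction k with
  | zero => intro z hz; exact ⟨z, 0, le_refl _, by simpa using hz, by simp⟩
  | succ k ih =>
    intro z hz
    have hπdvd : π ∣ z * star z := by
      refine dvd_trans ⟨star π, natCast_eq_mul_conj hπ⟩ ?_
      apply int_dvd_norm_cast
      rw [hz]
      exact Int.natCast_dvd_natCast.mpr ⟨p ^ k, by ring⟩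
    have hppos : (p:ℤ) ≠ 0 := by exact_mod_cast hp.ne_zero
    rcases hπp.2.2 _ _ hπdvd with hd | hd
    · obtain ⟨z', hz'⟩ := hd
      have hz'norm : z'.norm = ((p ^ k : ℕ) : ℤ) := by
        apply mul_left_cancel₀ hppos
        have : π.norm * z'.norm = z.norm := by rw [hz', Zsqrtd.norm_mul]
        rw [hπ] at this
        rw [this, hz]; push_cast; ring
      obtain ⟨u, j, hj, hu1, hu2⟩ := ih z' hz'norm
      exact ⟨u, j + 1, by omega, hu1, by
        rw [hz', hu2, show k + 1 - (j + 1) = k - j by omega, pow_succ]; ring⟩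
    · obtain ⟨w, hw⟩ := hd
      have hz2 : z = star π * star w := by
        have := congrArg star hw
        simpa [mul_comm] using this
      have hz'norm : (star w).norm = ((p ^ k : ℕ) : ℤ) := by
        apply mul_left_cancel₀ hppos
        have : (star π).norm * (star w).norm = z.norm := by rw [hz2, Zsqrtd.norm_mul]
        rw [Zsqrtd.norm_conj, hπ] at this
        rw [this, hz]; push_cast; ring
      obtain ⟨u, j, hj, hu1, hu2⟩ := ih (star w) hz'norm
      exact ⟨u, j, by omega, hu1, by
        rw [hz2, hu2, show k + 1 - j = (k - j) + 1 by omega, pow_succ]; ring⟩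

lemma card_F_split {p : ℕ} (hp : p.Prime) (h1 : p % 4 = 1) (k : ℕ) :
    Nat.card (F (p ^ k)) = 4 * (k + 1) := by
  obtain ⟨π, hπ, hπp, hππ⟩ := split_pi hp h1
  have hπ0 : π ≠ 0 := hπp.ne_zero
  have hsπ0 : star π ≠ 0 := fun h => hπ0 (by simpa using congrArg star h)
  have hnormpow : ∀ (w : ℤ[i]) (j : ℕ), (w ^ j).norm = w.norm ^ j :=
    fun w j => map_pow Zsqrtd.normMonoidHom w j
  have hmapnorm : ∀ (u : F 1) (j : Fin (k+1)),
      (u.1 * π ^ (j:ℕ) * (star π) ^ (k - (j:ℕ))).norm = ((p ^ k : ℕ) : ℤ) := by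
    rintro u j
    rw [Zsqrtd.norm_mul, Zsqrtd.norm_mul, u.2, hnormpow, hnormpow, Zsqrtd.norm_conj, hπ]
    push_cast
    rw [one_mul, ← pow_add, show (j:ℕ) + (k - (j:ℕ)) = k by omega]
  have key : Function.Bijective (fun uj : F 1 × Fin (k+1) =>
      (⟨uj.1.1 * π ^ (uj.2 : ℕ) * (star π) ^ (k - (uj.2 : ℕ)),
        hmapnorm uj.1 uj.2⟩ : F (p ^ k))) := by
    constructor
    · -- injectivity
      have main : ∀ (u v : ℤ[i]) (a b : ℕ), u.norm = 1 → v.norm = 1 →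
          a ≤ b → b ≤ k →
          u * π ^ a * (star π) ^ (k - a) = v * π ^ b * (star π) ^ (k - b) →
          a = b ∧ u = v := by
        intro u v a b hu hv hab hbk h
        have hcancel : π ^ a * (star π) ^ (k - b) ≠ 0 :=
          mul_ne_zero (pow_ne_zero _ hπ0) (pow_ne_zero _ hsπ0)
        have hc : (u * (star π) ^ (b - a)) * (π ^ a * (star π) ^ (k - b))
            = (v * π ^ (b - a)) * (π ^ a * (star π) ^ (k - b)) := by
          have l : u * (star π) ^ (b - a) * (π ^ a * (star π) ^ (k - b))
              = u * π ^ a * ((star π) ^ ((b - a) + (k - b))) := by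
            rw [pow_add]; ring
          have r : v * π ^ (b - a) * (π ^ a * (star π) ^ (k - b))
              = v * π ^ (a + (b - a)) * (star π) ^ (k - b) := by
            rw [pow_add]; ring
          rw [l, r, show (b - a) + (k - b) = k - a by omega,
            show a + (b - a) = b by omega, h]
        have h' := mul_right_cancel₀ hcancel hc
        rcases Nat.eq_zero_or_pos (b - a) with hba | hba
        · have hab' : a = b := by omega
          subst hab'
          simp only [hba, pow_zero, mul_one] at h'
          exact ⟨rfl, h'⟩
        · exfalso
          have hπdvd : π ∣ u * (star π) ^ (b - a) := by
            rw [h']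
            exact Dvd.dvd.mul_left (dvd_pow_self π (by omega)) v
          rcases hπp.2.2 _ _ hπdvd with hd | hd
          · exact hπp.not_unit (isUnit_of_dvd_unit hd (Zsqrtd.norm_eq_one_iff.mp
              (by rw [hu]; rfl)))
          · exact hππ (hπp.dvd_of_dvd_pow hd)
      rintro ⟨u, a⟩ ⟨v, b⟩ huv
      simp only [Subtype.mk.injEq] at huv
      rcases le_total (a : ℕ) (b : ℕ) with hab | hab
      · obtain ⟨h1', h2'⟩ := main u.1 v.1 a b u.2 v.2 hab (by omega) huv
        exact Prod.ext (Subtype.ext h2') (Fin.ext h1')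
      · obtain ⟨h1', h2'⟩ := main v.1 u.1 b a v.2 u.2 hab (by omega) huv.symm
        exact Prod.ext (Subtype.ext h2'.symm) (Fin.ext h1'.symm)
    · -- surjectivity
      rintro ⟨z, hz⟩
      obtain ⟨u, j, hj, hu1, hu2⟩ := split_descent hp hπ hπp k z hz
      exact ⟨(⟨u, hu1⟩, ⟨j, by omega⟩), Subtype.ext hu2.symm⟩
  have h : Nat.card (F 1 × Fin (k+1)) = Nat.card (F (p ^ k)) :=
    Nat.card_congr (Equiv.ofBijective _ key)
  rw [Nat.card_prod, card_F1] at h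
  simpa using h.symm

/-! ### The divisor sum `H n = ∑_{d ∣ n} χ₄(d)` -/

noncomputable def H (n : ℕ) : ℤ := ∑ d ∈ n.divisors, ZMod.χ₄ (d : ZMod 4)

open ArithmeticFunction in
noncomputable def chiA : ArithmeticFunction ℤ :=
  ⟨fun d => ZMod.χ₄ (d : ZMod 4), by simp⟩

open ArithmeticFunction in
lemma chiA_mult : chiA.IsMultiplicative := by
  constructor
  · show ZMod.χ₄ ((1 : ℕ) : ZMod 4) = 1
    norm_num
  · intro m n _
    show ZMod.χ₄ (((m * n : ℕ)) : ZMod 4) = ZMod.χ₄ (m : ZMod 4) * ZMod.χ₄ (n : ZMod 4)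
    push_cast
    rw [map_mul]

open ArithmeticFunction ArithmeticFunction.zeta in
lemma H_eq (n : ℕ) :
    H n = (((ζ : ArithmeticFunction ℕ) : ArithmeticFunction ℤ) * chiA) n := by
  rw [coe_zeta_mul_apply]
  rfl

open ArithmeticFunction in
lemma H_mul {m n : ℕ} (h : Nat.Coprime m n) : H (m * n) = H m * H n := by
  rw [H_eq, H_eq, H_eq]
  exact (isMultiplicative_zeta.natCast.mul chiA_mult).map_mul_of_coprime h

lemma H_prime_pow {p : ℕ} (hp : p.Prime) (k : ℕ) :
    H (p ^ k) = ∑ j ∈ Finset.range (k + 1), (ZMod.χ₄ (p : ZMod 4)) ^ j := by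
  unfold H
  rw [Nat.sum_divisors_prime_pow hp]
  refine Finset.sum_congr rfl fun j _ => ?_
  push_cast
  rw [map_pow]

lemma H_two_pow (k : ℕ) : H (2 ^ k) = 1 := by
  rw [H_prime_pow Nat.prime_two]
  have h2 : ZMod.χ₄ ((2 : ℕ) : ZMod 4) = 0 := by decide
  rw [h2]
  rw [Finset.sum_eq_single 0]
  · simp
  · intro j _ hj
    exact zero_pow hj
  · simp

lemma H_split_pow {p : ℕ} (h1 : p % 4 = 1) (k : ℕ) (hp : p.Prime) :
    H (p ^ k) = (k : ℤ) + 1 := by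
  rw [H_prime_pow hp]
  have h2 : ZMod.χ₄ ((p : ℕ) : ZMod 4) = 1 := ZMod.χ₄_nat_one_mod_four h1
  rw [h2]
  simp

lemma H_inert_pow {p : ℕ} (h3 : p % 4 = 3) (k : ℕ) (hp : p.Prime) :
    H (p ^ k) = if k % 2 = 0 then 1 else 0 := by
  rw [H_prime_pow hp]
  have h2 : ZMod.χ₄ ((p : ℕ) : ZMod 4) = -1 := ZMod.χ₄_nat_three_mod_four h3
  rw [h2, neg_one_geom_sum]
  rcases Nat.even_or_odd (k+1) with h | h
  · rw [if_pos h, if_neg (by rw [Nat.even_iff] at h; omega)]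
  · rw [if_neg (by simpa [Nat.even_iff, Nat.odd_iff] using h),
      if_pos (by rw [Nat.odd_iff] at h; omega)]

/-! ### Putting it together -/

lemma card_F_prime_pow {p : ℕ} (hp : p.Prime) (k : ℕ) :
    (Nat.card (F (p ^ k)) : ℤ) = 4 * H (p ^ k) := by
  rcases Nat.lt_or_ge p 3 with h2 | h3
  · have hp2 : p = 2 := by have := hp.two_le; omega
    subst hp2
    rw [card_F_two_pow, H_two_pow]
    norm_num
  · have hodd : p % 2 = 1 := Nat.odd_iff.mp (hp.odd_of_ne_two (by omega))
    rcases (by omega : p % 4 = 1 ∨ p % 4 = 3) with h | h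
    · rw [card_F_split hp h k, H_split_pow h k hp]
      push_cast
      ring
    · rcases Nat.even_or_odd k with he | ho
      · rw [card_F_inert_even hp h (Nat.even_iff.mp he), H_inert_pow h k hp,
          if_pos (Nat.even_iff.mp he)]
        norm_num
      · rw [card_F_inert_odd hp h (Nat.odd_iff.mp ho), H_inert_pow h k hp,
          if_neg (by rw [Nat.odd_iff] at ho; omega)]
        norm_num

lemma card_F_eq (n : ℕ) (hn : 0 < n) : (Nat.card (F n) : ℤ) = 4 * H n := by
  induction n using Nat.strong_induction_on with
  | _ n ih =>
    rcases Nat.lt_or_ge n 2 with h1 | h2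
    · have : n = 1 := by omega
      subst this
      rw [card_F1]
      unfold H
      simp
    · set p := n.minFac with hp_def
      have hp : p.Prime := Nat.minFac_prime (by omega)
      set k := n.factorization p with hk_def
      set m := n / p ^ k with hm_def
      have hsplit : p ^ k * m = n := Nat.ordProj_mul_ordCompl_eq_self n p
      have hkpos : 0 < k := hp.factorization_pos_of_dvd (by omega) (Nat.minFac_dvd n)
      have hcop : Nat.Coprime (p ^ k) m :=
        Nat.Coprime.pow_left k (Nat.coprime_ordCompl hp (by omega))
      have hmpos : 0 < m := Nat.ordCompl_pos p (by omega)
      have hppos : 0 < p ^ k := Nat.pow_pos hp.pos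
      have hmlt : m < n := by
        have hpk : 1 < p ^ k := by
          have := hp.two_le
          calc 1 < 2 ^ 1 := by norm_num
          _ ≤ p ^ k := Nat.pow_le_pow_left (by omega) k |>.trans' (Nat.pow_le_pow_right (by omega) (by omega))
        calc m < p ^ k * m := by nlinarith
        _ = n := hsplit
      have hcard := card_F_mul hcop hppos hmpos
      rw [hsplit] at hcard
      have hm := ih m hmlt hmpos
      have hpk := card_F_prime_pow hp k
      have hHn : H n = H (p ^ k) * H m := by rw [← hsplit, H_mul hcop]
      have : (4:ℤ) * Nat.card (F n) = (Nat.card (F (p ^ k)) : ℤ) * Nat.card (F m) := by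
        exact_mod_cast congrArg (Nat.cast : ℕ → ℤ) hcard
      rw [hpk, hm] at this
      rw [hHn]
      linarith

lemma H_eq_filter (n : ℕ) :
    H n = ((n.divisors.filter fun d => d % 4 = 1).card : ℤ) -
      ((n.divisors.filter fun d => d % 4 = 3).card : ℤ) := by
  unfold H
  rw [← Finset.sum_boole, ← Finset.sum_boole, ← Finset.sum_sub_distrib]
  refine Finset.sum_congr rfl fun d _ => ?_
  rw [ZMod.χ₄_nat_eq_if_mod_four]
  have := Nat.mod_lt d (show 0 < 4 by norm_num)
  have h2 : d % 2 = (d % 4) % 2 := (Nat.mod_mod_of_dvd d (by norm_num)).symm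
  rcases (by omega : d % 4 = 0 ∨ d % 4 = 1 ∨ d % 4 = 2 ∨ d % 4 = 3) with h | h | h | h <;>
    rw [h] at h2 <;> simp [h, h2]

end Jacobi

/-- The representation number `r(n)`: the number of pairs `(x, y) ∈ ℤ²`
with `x² + y² = n`. -/
noncomputable def repNumber (n : ℕ) : ℕ :=
  Nat.card {p : ℤ × ℤ // p.1 ^ 2 + p.2 ^ 2 = (n : ℤ)}

lemma repNumber_eq_card_F (n : ℕ) : repNumber n = Nat.card (Jacobi.F n) := by
  apply Nat.card_congr
  refine Equiv.ofBijective (fun p => ⟨⟨p.1.1, p.1.2⟩, by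
    rw [Zsqrtd.norm_def]
    have := p.2
    push_cast
    nlinarith [p.2]⟩) ⟨?_, ?_⟩
  · rintro ⟨⟨x, y⟩, h⟩ ⟨⟨x', y'⟩, h'⟩ hxy
    have := congrArg Subtype.val hxy
    rw [Zsqrtd.ext_iff] at this
    simp only [Subtype.mk.injEq, Prod.mk.injEq]
    exact this
  · rintro ⟨z, hz⟩
    refine ⟨⟨(z.re, z.im), ?_⟩, ?_⟩
    · rw [Zsqrtd.norm_def] at hz
      push_cast at hz ⊢
      nlinarith [hz]
    · apply Subtype.ext
      rfl

/-- Jacobi's theorem: `r(n) = 4 (#{d ∣ n, d ≡ 1 [MOD 4]} − #{d ∣ n, d ≡ 3 [MOD 4]})`. -/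
theorem jacobi_two_squares (n : ℕ) (hn : 0 < n) :
    (repNumber n : ℤ) =
      4 * (((n.divisors.filter fun d => d % 4 = 1).card : ℤ) -
        ((n.divisors.filter fun d => d % 4 = 3).card : ℤ)) := by
  rw [repNumber_eq_card_F, Jacobi.card_F_eq n hn, Jacobi.H_eq_filter]
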